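/- arXiv:2503.22633 — 5 statements merged into one kernel-verified Lean document; each statement's English description precedes it below -/
import Mathlib

section
/- Minrank is lower semicontinuous at concise tensors: if a sequence of nonzero tensors T_1, T_2, ... in C^a \otimes C^b \otimes C^c converges to a concise tensor T, then minrank(T) \leq liminf_{i \to \infty} minrank(T_i). -/
open scoped BigOperators

/-- Contraction of the first index of a 3-tensor with a covector, giving a matrix. -/
noncomputable def contr1 {ι₁ ι₂ ι₃ : Type*} [Fintype ι₁]
    (β : ι₁ → ℂ) (T : ι₁ → ι₂ → ι₃ → ℂ) : Matrix ι₂ ι₃ ℂ :=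
  Matrix.of fun j k => ∑ i, β i * T i j k

/-- Contraction of the second index. -/
noncomputable def contr2 {ι₁ ι₂ ι₃ : Type*} [Fintype ι₂]
    (γ : ι₂ → ℂ) (T : ι₁ → ι₂ → ι₃ → ℂ) : Matrix ι₁ ι₃ ℂ :=
  Matrix.of fun i k => ∑ j, γ j * T i j k

/-- Contraction of the third index. -/
noncomputable def contr3 {ι₁ ι₂ ι₃ : Type*} [Fintype ι₃]
    (δ : ι₃ → ℂ) (T : ι₁ → ι₂ → ι₃ → ℂ) : Matrix ι₁ ι₂ ℂ :=
  Matrix.of fun i j => ∑ k, δ k * T i j k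

/-- Restriction `(A ⊗ B ⊗ C) T` of a 3-tensor. -/
noncomputable def restrict {ι₁ ι₂ ι₃ κ₁ κ₂ κ₃ : Type*}
    [Fintype ι₁] [Fintype ι₂] [Fintype ι₃]
    (A : Matrix κ₁ ι₁ ℂ) (B : Matrix κ₂ ι₂ ℂ) (C : Matrix κ₃ ι₃ ℂ)
    (T : ι₁ → ι₂ → ι₃ → ℂ) : κ₁ → κ₂ → κ₃ → ℂ :=
  fun x y z => ∑ i, ∑ j, ∑ k, A x i * B y j * C z k * T i j k

/-- The polynomial multiplication tensor `P_{a,b}` (zero-based indices). -/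
noncomputable def polyMul (a b : ℕ) : Fin a → Fin b → Fin (a + b - 1) → ℂ :=
  fun i j k => if (k : ℕ) = (i : ℕ) + (j : ℕ) then 1 else 0

/-- The unit tensor `⟨r⟩`. -/
noncomputable def unitTensor (r : ℕ) : Fin r → Fin r → Fin r → ℂ :=
  fun i j k => if i = j ∧ j = k then 1 else 0

/-- The matrix multiplication tensor `M_n`. -/
noncomputable def MM (n : ℕ) :
    (Fin n × Fin n) → (Fin n × Fin n) → (Fin n × Fin n) → ℂ :=
  fun p q r => if p.2 = q.1 ∧ q.2 = r.1 ∧ r.2 = p.1 then 1 else 0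

/-- Minrank of a 3-tensor (w.r.t. first-index slices). -/
noncomputable def minrank {a b c : ℕ} (T : Fin a → Fin b → Fin c → ℂ) : ℕ :=
  sInf {r | ∃ β : Fin a → ℂ, contr1 β T ≠ 0 ∧ (contr1 β T).rank = r}

/-- A tensor is concise if all three flattenings are injective, i.e. all nonzero
contractions are nonzero matrices. -/
def Concise {a b c : ℕ} (T : Fin a → Fin b → Fin c → ℂ) : Prop :=
  (∀ β : Fin a → ℂ, β ≠ 0 → contr1 β T ≠ 0) ∧
  (∀ γ : Fin b → ℂ, γ ≠ 0 → contr2 γ T ≠ 0) ∧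
  (∀ δ : Fin c → ℂ, δ ≠ 0 → contr3 δ T ≠ 0)

/-- Gram matrix of the first flattening, `T₁^* T₁`. -/
noncomputable def gram1 {ι₁ ι₂ ι₃ : Type*} [Fintype ι₂] [Fintype ι₃]
    (T : ι₁ → ι₂ → ι₃ → ℂ) : Matrix ι₁ ι₁ ℂ :=
  Matrix.of fun i i' => ∑ j, ∑ k, (starRingEnd ℂ) (T i j k) * T i' j k

/-- Gram matrix of the second flattening. -/
noncomputable def gram2 {ι₁ ι₂ ι₃ : Type*} [Fintype ι₁] [Fintype ι₃]
    (T : ι₁ → ι₂ → ι₃ → ℂ) : Matrix ι₂ ι₂ ℂ :=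
  Matrix.of fun j j' => ∑ i, ∑ k, (starRingEnd ℂ) (T i j k) * T i j' k

/-- Gram matrix of the third flattening. -/
noncomputable def gram3 {ι₁ ι₂ ι₃ : Type*} [Fintype ι₁] [Fintype ι₂]
    (T : ι₁ → ι₂ → ι₃ → ℂ) : Matrix ι₃ ι₃ ℂ :=
  Matrix.of fun k k' => ∑ i, ∑ j, (starRingEnd ℂ) (T i j k) * T i j k'

/-- The tensor `M_{a,1,b}`. -/
noncomputable def Mab (a b : ℕ) : Fin a → Fin b → (Fin b × Fin a) → ℂ :=
  fun i k p => if p = (k, i) then 1 else 0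

/-- The antisymmetric tensor `e₁ ∧ e₂ ∧ e₃`. -/
noncomputable def wedge : Fin 3 → Fin 3 → Fin 3 → ℂ :=
  fun i j k => ∑ σ : Equiv.Perm (Fin 3),
    ((Equiv.Perm.sign σ : ℤ) : ℂ) * (if i = σ 0 ∧ j = σ 1 ∧ k = σ 2 then 1 else 0)

/-- The iterated matrix multiplication tensor of order `k`. -/
noncomputable def IMM (n k : ℕ) : (Fin k → Fin n × Fin n) → ℂ :=
  fun x => ∑ i : Fin k → Fin n, if ∀ ℓ : Fin k, x ℓ = (i ℓ, i ⟨((ℓ : ℕ) + 1) % k, Nat.mod_lt _ ℓ.pos⟩) then 1 else 0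

/-- Restriction of an order-`k` tensor by applying a linear map to each factor. -/
noncomputable def restrictK {k : ℕ} {ι κ : Fin k → Type*} [∀ ℓ, Fintype (ι ℓ)]
    (A : ∀ ℓ, Matrix (κ ℓ) (ι ℓ) ℂ) (T : (∀ ℓ, ι ℓ) → ℂ) : (∀ ℓ, κ ℓ) → ℂ :=
  fun x => ∑ y : ∀ ℓ, ι ℓ, (∏ ℓ, A ℓ (x ℓ) (y ℓ)) * T y

open Filter Matrix

/-- Selecting columns of a matrix: if `s ≤ rank`, there are `s` linearly independent columns. -/
lemma aux_exists_cols {m n : ℕ} (s : ℕ) (M : Matrix (Fin m) (Fin n) ℂ) (h : s ≤ M.rank) :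
    ∃ g : Fin s → Fin n, LinearIndependent ℂ (fun x => Mᵀ (g x)) := by
  classical
  obtain ⟨t, hts, hspan, hli⟩ := exists_linearIndependent ℂ (Set.range Mᵀ)
  have htfin : t.Finite := (Set.finite_range Mᵀ).subset hts
  haveI : Fintype t := htfin.fintype
  have hcard : s ≤ Fintype.card t := by
    have h1 : Module.finrank ℂ (Submodule.span ℂ t) = t.toFinset.card :=
      finrank_span_set_eq_card hli
    have h2 : M.rank = Module.finrank ℂ (Submodule.span ℂ t) := by
      rw [Matrix.rank_eq_finrank_span_cols, hspan]; rfl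
    rw [Set.toFinset_card] at h1
    omega
  obtain ⟨e⟩ : Nonempty (Fin s ↪ t) := Function.Embedding.nonempty_of_card_le (by simpa using hcard)
  have hpre : ∀ x : Fin s, ∃ j : Fin n, Mᵀ j = (e x : Fin m → ℂ) := fun x => hts (e x).2
  choose g hg using hpre
  refine ⟨g, ?_⟩
  have : (fun x => Mᵀ (g x)) = (fun u : t => (u : Fin m → ℂ)) ∘ e := by
    funext x; simp [hg x]
  rw [this]
  exact hli.comp e e.injective

/-- If `s ≤ rank M` then some `s × s` submatrix has nonzero determinant. -/
lemma aux_exists_det_ne {m n : ℕ} (s : ℕ) (M : Matrix (Fin m) (Fin n) ℂ) (h : s ≤ M.rank) :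
    ∃ (f : Fin s → Fin m) (g : Fin s → Fin n), (M.submatrix f g).det ≠ 0 := by
  obtain ⟨g, hg⟩ := aux_exists_cols s M h
  set M₁ : Matrix (Fin s) (Fin m) ℂ := Mᵀ.submatrix g id with hM₁
  have hrows : LinearIndependent ℂ M₁ := hg
  have hrank : M₁.rank = s := by have := hrows.rank_matrix; rw [Fintype.card_fin] at this; exact this
  obtain ⟨f, hf⟩ := aux_exists_cols s M₁ (le_of_eq hrank.symm)
  have heq : (fun y => M₁ᵀ (f y)) = (M.submatrix f g) := by
    funext y; funext x; rfl
  rw [heq] at hf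
  have : IsUnit (M.submatrix f g) := Matrix.linearIndependent_rows_iff_isUnit.mp hf
  exact ⟨f, g, ((Matrix.isUnit_iff_isUnit_det _).mp this).ne_zero⟩

/-- Submatrix as a product of selection matrices. -/
lemma aux_submatrix_rank_le {m n s : ℕ} (M : Matrix (Fin m) (Fin n) ℂ)
    (f : Fin s → Fin m) (g : Fin s → Fin n) : (M.submatrix f g).rank ≤ M.rank := by
  classical
  set P : Matrix (Fin s) (Fin m) ℂ := Matrix.of fun x j => if j = f x then 1 else 0 with hP
  set Q : Matrix (Fin n) (Fin s) ℂ := Matrix.of fun k y => if k = g y then 1 else 0 with hQ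
  have hsub : M.submatrix f g = P * M * Q := by
    ext x y
    simp only [Matrix.mul_apply, hP, hQ, Matrix.of_apply, Matrix.submatrix_apply]
    simp [Finset.sum_ite_eq', Finset.mul_sum, mul_comm]
  rw [hsub]
  exact le_trans (Matrix.rank_mul_le _ _) (le_trans (min_le_left _ _)
    (le_trans (Matrix.rank_mul_le _ _) (min_le_right _ _)))

/-- If a submatrix has nonzero determinant, the rank is at least its size. -/
lemma aux_rank_ge_of_det_ne {m n s : ℕ} (M : Matrix (Fin m) (Fin n) ℂ)
    (f : Fin s → Fin m) (g : Fin s → Fin n) (h : (M.submatrix f g).det ≠ 0) :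
    s ≤ M.rank := by
  have hu : IsUnit (M.submatrix f g) := (Matrix.isUnit_iff_isUnit_det _).mpr h.isUnit
  have : (M.submatrix f g).rank = s := by
    simpa using Matrix.rank_of_isUnit _ hu
  rw [← this]
  exact aux_submatrix_rank_le M f g

/-- Lower semicontinuity of matrix rank. -/
lemma aux_rank_lsc {m n r : ℕ} (M : ℕ → Matrix (Fin m) (Fin n) ℂ) (M₀ : Matrix (Fin m) (Fin n) ℂ)
    (h : Tendsto M atTop (nhds M₀)) (hr : ∀ i, (M i).rank ≤ r) : M₀.rank ≤ r := by
  by_contra h'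
  push_neg at h'
  obtain ⟨f, g, hdet⟩ := aux_exists_det_ne (r + 1) M₀ h'
  have hcont : Continuous fun A : Matrix (Fin m) (Fin n) ℂ => (A.submatrix f g).det :=
    (continuous_id.matrix_submatrix f g).matrix_det
  have hc : Tendsto (fun i => ((M i).submatrix f g).det) atTop
      (nhds ((M₀.submatrix f g).det)) := (hcont.tendsto _).comp h
  obtain ⟨i, hi⟩ := (hc.eventually_ne hdet).exists
  exact absurd (hr i) (by have := aux_rank_ge_of_det_ne (M i) f g hi; omega)

/-- `contr1` is jointly continuous. -/
lemma aux_contr1_continuous {a b c : ℕ} :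
    Continuous fun p : (Fin a → ℂ) × (Fin a → Fin b → Fin c → ℂ) => contr1 p.1 p.2 := by
  unfold contr1
  refine continuous_pi fun j => continuous_pi fun k => ?_
  show Continuous fun p : (Fin a → ℂ) × (Fin a → Fin b → Fin c → ℂ) => ∑ i, p.1 i * p.2 i j k
  refine continuous_finset_sum _ fun i _ => ?_
  exact ((continuous_apply i).comp continuous_fst).mul
    ((continuous_apply k).comp ((continuous_apply j).comp
      ((continuous_apply i).comp continuous_snd)))

lemma aux_contr1_smul {a b c : ℕ} (z : ℂ) (β : Fin a → ℂ) (T : Fin a → Fin b → Fin c → ℂ) :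
    contr1 (z • β) T = z • contr1 β T := by
  ext j k
  simp [contr1, Finset.mul_sum, mul_assoc]

lemma aux_rank_smul_le {m n : ℕ} (z : ℂ) (M : Matrix (Fin m) (Fin n) ℂ) :
    (z • M).rank ≤ M.rank := by
  have : z • M = (z • (1 : Matrix (Fin m) (Fin m) ℂ)) * M := by
    rw [Matrix.smul_mul, Matrix.one_mul]
  rw [this]
  exact Matrix.rank_mul_le_right _ _

lemma aux_minrank_nonempty {a b c : ℕ} (T : Fin a → Fin b → Fin c → ℂ) (hT : T ≠ 0) :
    ∃ r, r ∈ {r | ∃ β : Fin a → ℂ, contr1 β T ≠ 0 ∧ (contr1 β T).rank = r} ∧ r ≤ b := by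
  classical
  obtain ⟨i₀, hi₀⟩ := Function.ne_iff.mp hT
  obtain ⟨j₀, hj₀⟩ := Function.ne_iff.mp hi₀
  obtain ⟨k₀, hk₀⟩ := Function.ne_iff.mp hj₀
  have hne : contr1 (Pi.single i₀ 1) T ≠ 0 := by
    intro h0
    apply hk₀
    have := congrFun (congrFun h0 j₀) k₀
    simpa [contr1, Pi.single_apply] using this
  exact ⟨_, ⟨Pi.single i₀ 1, hne, rfl⟩, by
    simpa using Matrix.rank_le_card_height (contr1 (Pi.single i₀ 1) T)⟩

theorem minrank_lower_semicontinuous {a b c : ℕ}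
    (T : ℕ → (Fin a → Fin b → Fin c → ℂ)) (S : Fin a → Fin b → Fin c → ℂ)
    (hT : ∀ i, T i ≠ 0) (hS : Concise S)
    (hlim : Filter.Tendsto T Filter.atTop (nhds S)) :
    minrank S ≤ Filter.liminf (fun i => minrank (T i)) Filter.atTop := by
  classical
  set L := Filter.liminf (fun i => minrank (T i)) Filter.atTop with hL
  have hne : ∀ i, {r | ∃ β : Fin a → ℂ, contr1 β (T i) ≠ 0 ∧ (contr1 β (T i)).rank = r}.Nonempty :=
    fun i => ⟨(aux_minrank_nonempty (T i) (hT i)).choose,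
      (aux_minrank_nonempty (T i) (hT i)).choose_spec.1⟩
  have hbdd : ∀ i, minrank (T i) ≤ b := by
    intro i
    obtain ⟨r, hr, hrb⟩ := aux_minrank_nonempty (T i) (hT i)
    exact le_trans (Nat.sInf_le hr) hrb
  -- frequently minrank (T i) ≤ L
  have hfreq : ∃ᶠ i in atTop, minrank (T i) ≤ L := by
    by_contra hcon
    rw [Filter.not_frequently] at hcon
    have hco : IsCoboundedUnder (· ≥ ·) atTop (fun i => minrank (T i)) :=
      Filter.IsBoundedUnder.isCoboundedUnder_ge (Filter.isBoundedUnder_of ⟨b, hbdd⟩)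
    have : L + 1 ≤ L := by
      rw [hL]
      exact Filter.le_liminf_of_le hco (hcon.mono fun i h => by omega)
    omega
  obtain ⟨φ, hφ, hφL⟩ := Filter.extraction_of_frequently_atTop hfreq
  -- choose minrank-achieving covectors
  have hmem : ∀ n, ∃ β : Fin a → ℂ,
      contr1 β (T (φ n)) ≠ 0 ∧ (contr1 β (T (φ n))).rank = minrank (T (φ n)) :=
    fun n => Nat.sInf_mem (hne (φ n))
  choose βn hβn1 hβn2 using hmem
  have hβn0 : ∀ n, βn n ≠ 0 := by
    intro n h0
    apply hβn1 n
    ext j k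
    simp [h0, contr1]
  -- normalize
  set un : ℕ → (Fin a → ℂ) := fun n => ((‖βn n‖ : ℂ))⁻¹ • βn n with hun
  have hunorm : ∀ n, un n ∈ Metric.sphere (0 : Fin a → ℂ) 1 := by
    intro n
    rw [mem_sphere_zero_iff_norm, hun]
    have h1 : ‖βn n‖ ≠ 0 := norm_ne_zero_iff.mpr (hβn0 n)
    simp [norm_smul, inv_mul_cancel₀ h1]
  have hz : ∀ n, ((‖βn n‖ : ℂ))⁻¹ ≠ 0 := by
    intro n
    simp [norm_ne_zero_iff.mpr (hβn0 n)]
  have hun1 : ∀ n, contr1 (un n) (T (φ n)) ≠ 0 := by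
    intro n h0
    rw [hun, aux_contr1_smul] at h0
    exact hβn1 n (by simpa [hz n] using smul_eq_zero.mp h0)
  have hun2 : ∀ n, (contr1 (un n) (T (φ n))).rank ≤ L := by
    intro n
    rw [hun, aux_contr1_smul]
    exact le_trans (aux_rank_smul_le _ _) (by rw [hβn2]; exact hφL n)
  -- compactness
  obtain ⟨β, hβs, ψ, hψ, hβlim⟩ :=
    (isCompact_sphere (0 : Fin a → ℂ) 1).tendsto_subseq hunorm
  have hβ0 : β ≠ 0 := by
    intro h0
    rw [mem_sphere_zero_iff_norm, h0] at hβs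
    simp at hβs
  have hTlim : Tendsto (fun n => T (φ (ψ n))) atTop (nhds S) :=
    hlim.comp (hφ.comp hψ).tendsto_atTop
  have hMlim : Tendsto (fun n => contr1 (un (ψ n)) (T (φ (ψ n)))) atTop
      (nhds (contr1 β S)) := by
    have := (aux_contr1_continuous.tendsto (β, S)).comp
      ((hβlim.prodMk_nhds hTlim) :
        Tendsto (fun n => (un (ψ n), T (φ (ψ n)))) atTop (nhds (β, S)))
    exact this
  have hrank : (contr1 β S).rank ≤ L :=
    aux_rank_lsc _ _ hMlim (fun n => hun2 (ψ n))
  exact le_trans (Nat.sInf_le ⟨β, hS.1 β hβ0, rfl⟩) hrank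
end

section
/- For all n \geq 1 and c with n^2 - n + 1 < c, the matrix multiplication tensor M_n does not restrict to the polynomial multiplication tensor P_{2,c-1}; i.e., there are no linear maps A, B, C with (A \otimes B \otimes C) M_n = P_{2,c-1}. -/
open scoped BigOperators

/-!
Restriction by `A ⊗ B ⊗ C` multiplies a slice of the tensor by `B` and `Cᵀ` on either side, so
it cannot raise the rank of a slice. A slice of `M_n` is, up to a column permutation, `Y ⊗ₖ 1`
for an `n × n` matrix `Y` depending linearly on the covector, so its rank is at most
`n · rank Y`. The two slices of `A` span a pencil of complex `n × n` matrices, which contains a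
singular member, so some nonzero `β` yields a slice of rank at most `n (n - 1)`. On the other
side every nonzero slice `β₀ I + β₁ J` of `P_{2,c-1}` is a band matrix containing a triangular
`(c - 1) × (c - 1)` block with nonzero diagonal, hence has rank `c - 1 > n (n - 1)`.
-/

open Matrix
open scoped Kronecker

namespace Matrix

variable {K : Type*} [Field K]

theorem exists_eq_mul_fin_rank {m n : Type*} [Fintype n] (A : Matrix m n K) :
    ∃ (U : Matrix m (Fin A.rank) K) (V : Matrix (Fin A.rank) n K), A = U * V := by
  let W := Submodule.span K (Set.range A.col)
  have : Module.Finite K W := Module.Finite.span_of_finite K (Set.finite_range _)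
  let b : Module.Basis (Fin A.rank) K W :=
    Module.finBasisOfFinrankEq K W A.rank_eq_finrank_span_cols.symm
  have hcol : ∀ j, A.col j ∈ W := fun j => Submodule.subset_span ⟨j, rfl⟩
  refine ⟨of fun i k => (b k : m → K) i, of fun k j => b.repr ⟨A.col j, hcol j⟩ k, ?_⟩
  ext i j
  have := congrArg (fun w : W => (w : m → K) i) (b.sum_repr ⟨A.col j, hcol j⟩)
  simp only [Submodule.coe_sum, Submodule.coe_smul, Finset.sum_apply, Pi.smul_apply,
    smul_eq_mul] at this
  simpa [mul_apply, mul_comm] using this.symm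

theorem rank_kronecker_le {m n p q : Type*} [Fintype n] [Fintype q]
    (A : Matrix m n K) (B : Matrix p q K) : (A ⊗ₖ B).rank ≤ A.rank * B.rank := by
  obtain ⟨U, V, hA⟩ := A.exists_eq_mul_fin_rank
  obtain ⟨U', V', hB⟩ := B.exists_eq_mul_fin_rank
  calc (A ⊗ₖ B).rank = ((U ⊗ₖ U') * (V ⊗ₖ V')).rank := by rw [← mul_kronecker_mul, ← hA, ← hB]
    _ ≤ (U ⊗ₖ U').rank := rank_mul_le_left _ _
    _ ≤ Fintype.card (Fin A.rank × Fin B.rank) := rank_le_card_width _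
    _ = A.rank * B.rank := by simp

theorem rank_lt_card_of_not_isUnit {n : Type*} [Fintype n] [DecidableEq n] {A : Matrix n n K}
    (hA : ¬IsUnit A) : A.rank < Fintype.card n := by
  refine A.rank_le_card_width.lt_of_ne fun hrank => hA ?_
  rw [← mulVec_surjective_iff_isUnit]
  refine LinearMap.range_eq_top.mp (Submodule.eq_top_of_finrank_eq (S := A.mulVecLin.range) ?_)
  rwa [Module.finrank_fintype_fun_eq_card]

theorem card_le_rank_of_isUpperTriangular_submatrix {m n ι : Type*} [Fintype n] [Fintype ι]
    [LinearOrder ι] (M : Matrix m n K) (r : ι → m) (c : ι → n)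
    (hM : (M.submatrix r c).IsUpperTriangular) (hdiag : ∀ i, M (r i) (c i) ≠ 0) :
    Fintype.card ι ≤ M.rank := by
  have hdet : (M.submatrix r c).det ≠ 0 := by
    rw [det_of_isUpperTriangular hM]
    exact Finset.prod_ne_zero_iff.mpr fun i _ => hdiag i
  exact (rank_of_det_ne_zero hdet).symm.trans_le (rank_submatrix_le M r c)

theorem exists_ne_zero_rank_smul_add_smul_le [IsAlgClosed K] {n : Type*} [Fintype n]
    [DecidableEq n] (X₀ X₁ : Matrix n n K) :
    ∃ β : Fin 2 → K, β ≠ 0 ∧ (β 0 • X₀ + β 1 • X₁).rank ≤ Fintype.card n - 1 := by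
  cases isEmpty_or_nonempty n with
  | inl _ => exact ⟨![1, 0], by simp, (rank_le_card_width _).trans_eq (by simp)⟩
  | inr _ =>
    by_cases hX₁ : IsUnit X₁
    · obtain ⟨μ, hμ⟩ := Module.End.exists_eigenvalue (X₁⁻¹ * X₀).mulVecLin
      obtain ⟨v, hv⟩ := hμ.exists_hasEigenvector
      have hv' : (X₁⁻¹ * X₀) *ᵥ v = μ • v := hv.apply_eq_smul
      have hker : (X₀ - μ • X₁) *ᵥ v = 0 := by
        rw [sub_mulVec, ← mul_nonsing_inv_cancel_left X₁ X₀ ((isUnit_iff_isUnit_det _).mp hX₁),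
          ← mulVec_mulVec, hv', mulVec_smul, smul_mulVec, sub_self]
      refine ⟨![1, -μ], by simp, ?_⟩
      have hsing : ¬IsUnit (X₀ - μ • X₁) := fun hu =>
        hv.2 (mulVec_injective_iff_isUnit.mpr hu (by rw [hker, mulVec_zero]))
      have := rank_lt_card_of_not_isUnit hsing
      simp only [cons_val_zero, cons_val_one, one_smul, neg_smul, ← sub_eq_add_neg]
      omega
    · have := rank_lt_card_of_not_isUnit hX₁
      refine ⟨![0, 1], by simp, ?_⟩
      simp only [cons_val_zero, cons_val_one, zero_smul, one_smul, zero_add]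
      omega

end Matrix

section Tensor

variable {ι₁ ι₂ ι₃ κ₁ κ₂ κ₃ : Type*} [Fintype ι₁] [Fintype ι₂] [Fintype ι₃] [Fintype κ₁]

theorem contr1_restrict (A : Matrix κ₁ ι₁ ℂ) (B : Matrix κ₂ ι₂ ℂ) (C : Matrix κ₃ ι₃ ℂ)
    (T : ι₁ → ι₂ → ι₃ → ℂ) (β : κ₁ → ℂ) :
    contr1 β (restrict A B C T) = B * contr1 (β ᵥ* A) T * Cᵀ := by
  ext y z
  simp only [contr1, restrict, mul_apply, of_apply, transpose_apply, vecMul, dotProduct,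
    Finset.mul_sum, Finset.sum_mul]
  simp_rw [Finset.sum_comm (s := (Finset.univ : Finset κ₁)),
    Finset.sum_comm (s := (Finset.univ : Finset ι₁)),
    Finset.sum_comm (s := (Finset.univ : Finset ι₂))]
  congr! 4
  ring

theorem rank_contr1_restrict_le [Fintype κ₃] (A : Matrix κ₁ ι₁ ℂ) (B : Matrix κ₂ ι₂ ℂ)
    (C : Matrix κ₃ ι₃ ℂ) (T : ι₁ → ι₂ → ι₃ → ℂ) (β : κ₁ → ℂ) :
    (contr1 β (restrict A B C T)).rank ≤ (contr1 (β ᵥ* A) T).rank := by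
  rw [contr1_restrict]
  exact (rank_mul_le_left _ _).trans (rank_mul_le_right _ _)

end Tensor

theorem contr1_MM {n : ℕ} (γ : Fin n × Fin n → ℂ) :
    contr1 γ (MM n) =
      ((of fun a b => γ (b, a)) ⊗ₖ (1 : Matrix (Fin n) (Fin n) ℂ)).submatrix id Prod.swap := by
  ext ⟨q₁, q₂⟩ ⟨r₁, r₂⟩
  by_cases h : q₂ = r₁ <;>
    simp [contr1, MM, one_apply, Fintype.sum_prod_type, h, ite_and, eq_comm]

theorem rank_contr1_MM_le {n : ℕ} (γ : Fin n × Fin n → ℂ) :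
    (contr1 γ (MM n)).rank ≤ (of fun a b => γ (b, a)).rank * n := by
  rw [contr1_MM]
  calc _ ≤ ((of fun a b => γ (b, a)) ⊗ₖ (1 : Matrix (Fin n) (Fin n) ℂ)).rank :=
        rank_submatrix_le _ _ _
    _ ≤ _ := rank_kronecker_le _ _
    _ = _ := by rw [rank_one, Fintype.card_fin]

theorem le_rank_contr1_polyMul_two (b : ℕ) {β : Fin 2 → ℂ} (hβ : β ≠ 0) :
    b ≤ (contr1 β (polyMul 2 b)).rank := by
  have hentry : ∀ j k, contr1 β (polyMul 2 b) j k =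
      β 0 * (if (k : ℕ) = j then 1 else 0) + β 1 * (if (k : ℕ) = j + 1 then 1 else 0) := by
    intro j k
    simp [contr1, polyMul, Fin.sum_univ_two, add_comm]
  rcases eq_or_ne (β 0) 0 with h₀ | h₀
  · have h₁ : β 1 ≠ 0 := fun h₁ => hβ (funext (Fin.forall_fin_two.mpr ⟨h₀, h₁⟩))
    simpa using card_le_rank_of_isUpperTriangular_submatrix _ id
      (fun k : Fin b => (⟨k + 1, by omega⟩ : Fin (2 + b - 1)))
      (fun i j (hij : j < i) => by
        simp only [submatrix_apply, id_eq, hentry]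
        split_ifs <;> first | omega | simp [h₀])
      (fun i => by simp [hentry, h₁])
  · simpa using card_le_rank_of_isUpperTriangular_submatrix _ id
      (fun k : Fin b => (⟨k, by omega⟩ : Fin (2 + b - 1)))
      (fun i j (hij : j < i) => by
        simp only [submatrix_apply, id_eq, hentry]
        split_ifs <;> first | omega | simp)
      (fun i => by simp [hentry, h₀])

theorem MM_not_restrict_polyMul_two_general (n c : ℕ)
    (hc : n ^ 2 - n + 1 < c) :
    ¬ ∃ (A : Matrix (Fin 2) (Fin n × Fin n) ℂ)
        (B : Matrix (Fin (c - 1)) (Fin n × Fin n) ℂ)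
        (C : Matrix (Fin (2 + (c - 1) - 1)) (Fin n × Fin n) ℂ),
        restrict A B C (MM n) = polyMul 2 (c - 1) := by
  rintro ⟨A, B, C, hABC⟩
  let X : Fin 2 → Matrix (Fin n) (Fin n) ℂ := fun a => of fun p q => A a (q, p)
  obtain ⟨β, hβ, hsingular⟩ := exists_ne_zero_rank_smul_add_smul_le (X 0) (X 1)
  have hslice : (of fun p q => (β ᵥ* A) (q, p)) = β 0 • X 0 + β 1 • X 1 := by
    ext p q
    simp [X, vecMul, dotProduct, Fin.sum_univ_two]
  have hupper : (contr1 β (polyMul 2 (c - 1))).rank ≤ (n - 1) * n :=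
    calc (contr1 β (polyMul 2 (c - 1))).rank = (contr1 β (restrict A B C (MM n))).rank := by
          rw [hABC]
      _ ≤ (contr1 (β ᵥ* A) (MM n)).rank := rank_contr1_restrict_le A B C (MM n) β
      _ ≤ (of fun p q => (β ᵥ* A) (q, p)).rank * n := rank_contr1_MM_le _
      _ ≤ (n - 1) * n := by
          rw [hslice]
          simpa using Nat.mul_le_mul_right n hsingular
  have hlower := le_rank_contr1_polyMul_two (c - 1) hβ
  have hsq : (n - 1) * n = n ^ 2 - n := by rw [Nat.sub_one_mul, sq]
  omega

theorem MM_not_restrict_polyMul_two (n c : ℕ) (hn : 1 ≤ n)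
    (hc : n ^ 2 - n + 1 < c) :
    ¬ ∃ (A : Matrix (Fin 2) (Fin n × Fin n) ℂ)
        (B : Matrix (Fin (c - 1)) (Fin n × Fin n) ℂ)
        (C : Matrix (Fin (2 + (c - 1) - 1)) (Fin n × Fin n) ℂ),
        restrict A B C (MM n) = polyMul 2 (c - 1) :=
  MM_not_restrict_polyMul_two_general n c hc
end

section
/- There exists a positive scalar multiple P'_c of the tensor P_c = P_{2,c-1} (obtained by acting with diagonal determinant-one matrices) whose moment map image is uniform: explicitly, the tensor P'_c = e_1 \otimes D_1 + e_2 \otimes D_2, where D_1 is the (c-1) \times c matrix with (D_1)_{j,j} = sqrt(c-j) and zeros elsewhere, and D_2 is the (c-1) \times c matrix with (D_2)_{j,j+1} = sqrt(j) and zeros elsewhere, satisfies \mu_1(P'_c) = I_2/2, \mu_2(P'_c) = I_{c-1}/(c-1), \mu_3(P'_c) = I_c/c. -/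
open scoped BigOperators

/-- The rescaled pencil tensor `P'_c` with uniform marginals. -/
noncomputable def pencilScaled (c : ℕ) : Fin 2 → Fin (c - 1) → Fin c → ℂ :=
  fun i j k =>
    if i = 0 then
      (if (k : ℕ) = (j : ℕ) then (Real.sqrt ((c : ℝ) - 1 - (j : ℕ)) : ℂ) else 0)
    else
      (if (k : ℕ) = (j : ℕ) + 1 then (Real.sqrt ((j : ℕ) + 1) : ℂ) else 0)

/-!
`pencilScaled c` is supported on the triples with `k = j + i`, so any two of its indices determine
the third: the tensor is free, and all three Gram matrices are diagonal, with the marginal sums of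
the squared moduli `|T i j k|²` on the diagonal. These squared moduli are the integers `c - 1 - j`
(for `i = 0`) and `j + 1` (for `i = 1`), and the marginals are constant: the two row sums are both
`1 + ⋯ + (c - 1)`, each `j` collects `(c - 1 - j) + (j + 1) = c`, and each `k` collects
`(c - 1 - k) + k = c - 1`, where the term that is missing at `k = c - 1`, resp. `k = 0`, vanishes
anyway.
-/

open Finset

lemma Fin.sum_ite_val_eq {M : Type*} [AddCommMonoid M] {n : ℕ} (m : ℕ) (f : Fin n → M) :
    ∑ k : Fin n, (if (k : ℕ) = m then f k else 0) = if h : m < n then f ⟨m, h⟩ else 0 := by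
  split_ifs with h
  · simp [← Fin.ext_iff (b := ⟨m, h⟩)]
  · exact sum_eq_zero fun k _ => if_neg (by have := k.isLt; omega)

lemma Fin.sum_ite_eq_val_add {M : Type*} [AddCommMonoid M] (n s m : ℕ) (x : M) :
    ∑ j : Fin n, (if m = (j : ℕ) + s then x else 0) =
      if s ≤ m ∧ m < n + s then x else 0 := by
  rw [Fin.sum_univ_eq_sum_range (fun j => if m = j + s then x else 0)]
  split_ifs with h
  · rw [sum_eq_single (m - s) (fun j _ hj => if_neg (by omega))
      (fun hm => absurd (mem_range.2 (by omega)) hm), if_pos (by omega)]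
  · exact sum_eq_zero fun j hj => if_neg (by rw [mem_range] at hj; omega)

lemma Fin.two_mul_sum_val_add_one (n : ℕ) : 2 * ∑ j : Fin n, ((j : ℕ) + 1) = n * (n + 1) := by
  induction n with
  | zero => rfl
  | succ n ih =>
    simp only [Fin.sum_univ_castSucc, Fin.val_castSucc, Fin.val_last, mul_add, ih]
    ring

lemma Fin.sum_sub_val (n : ℕ) : ∑ j : Fin n, (n - j) = ∑ j : Fin n, ((j : ℕ) + 1) :=
  Fintype.sum_equiv Fin.revPerm _ _ fun j => by simp only [Fin.revPerm_apply, Fin.val_rev]; omega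

lemma starRingEnd_sqrt_mul_sqrt {r : ℝ} (hr : 0 ≤ r) :
    starRingEnd ℂ (√r : ℂ) * √r = r := by
  rw [Complex.conj_ofReal, ← Complex.ofReal_mul, Real.mul_self_sqrt hr]

def IsFree {ι₁ ι₂ ι₃ : Type*} (T : ι₁ → ι₂ → ι₃ → ℂ) : Prop :=
  (∀ i i' j k, T i j k ≠ 0 → T i' j k ≠ 0 → i = i') ∧
  (∀ i j j' k, T i j k ≠ 0 → T i j' k ≠ 0 → j = j') ∧
  (∀ i j k k', T i j k ≠ 0 → T i j k' ≠ 0 → k = k')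

lemma IsFree.of_ne_zero_imp_val_eq_add {a b n : ℕ} {T : Fin a → Fin b → Fin n → ℂ}
    (hT : ∀ i j k, T i j k ≠ 0 → (k : ℕ) = j + i) : IsFree T := by
  refine ⟨fun i i' j k h h' => ?_, fun i j j' k h h' => ?_, fun i j k k' h h' => ?_⟩ <;>
  · have := hT _ _ _ h
    have := hT _ _ _ h'
    ext
    omega

namespace IsFree

variable {ι₁ ι₂ ι₃ : Type*} {T : ι₁ → ι₂ → ι₃ → ℂ}

lemma gram1_eq_diagonal [Fintype ι₂] [Fintype ι₃] [DecidableEq ι₁] (hT : IsFree T) :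
    gram1 T = Matrix.diagonal fun i => ∑ j, ∑ k, starRingEnd ℂ (T i j k) * T i j k := by
  ext i i'
  rcases eq_or_ne i i' with rfl | hi
  · simp [gram1]
  refine (sum_eq_zero fun j _ => sum_eq_zero fun k _ => ?_).trans
    (Matrix.diagonal_apply_ne _ hi).symm
  simp only [mul_eq_zero, map_eq_zero]
  by_contra! h
  exact hi (hT.1 i i' j k h.1 h.2)

lemma gram2_eq_diagonal [Fintype ι₁] [Fintype ι₃] [DecidableEq ι₂] (hT : IsFree T) :
    gram2 T = Matrix.diagonal fun j => ∑ i, ∑ k, starRingEnd ℂ (T i j k) * T i j k := by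
  ext j j'
  rcases eq_or_ne j j' with rfl | hj
  · simp [gram2]
  refine (sum_eq_zero fun i _ => sum_eq_zero fun k _ => ?_).trans
    (Matrix.diagonal_apply_ne _ hj).symm
  simp only [mul_eq_zero, map_eq_zero]
  by_contra! h
  exact hj (hT.2.1 i j j' k h.1 h.2)

lemma gram3_eq_diagonal [Fintype ι₁] [Fintype ι₂] [DecidableEq ι₃] (hT : IsFree T) :
    gram3 T = Matrix.diagonal fun k => ∑ i, ∑ j, starRingEnd ℂ (T i j k) * T i j k := by
  ext k k'
  rcases eq_or_ne k k' with rfl | hk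
  · simp [gram3]
  refine (sum_eq_zero fun i _ => sum_eq_zero fun j _ => ?_).trans
    (Matrix.diagonal_apply_ne _ hk).symm
  simp only [mul_eq_zero, map_eq_zero]
  by_contra! h
  exact hk (hT.2.2 i j k k' h.1 h.2)

end IsFree

lemma trace_gram1 {ι₁ ι₂ ι₃ : Type*} [Fintype ι₁] [Fintype ι₂] [Fintype ι₃]
    (T : ι₁ → ι₂ → ι₃ → ℂ) :
    (gram1 T).trace = ∑ i, ∑ j, ∑ k, starRingEnd ℂ (T i j k) * T i j k :=
  rfl

-- Written in terms of `k`, so that it is constant along sums over `j`.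
def pencilWeight (c : ℕ) (i : Fin 2) (j : Fin (c - 1)) (k : Fin c) : ℕ :=
  if (k : ℕ) = j + i then (if i = 0 then c - 1 - k else k) else 0

lemma star_pencilScaled_mul_self (c : ℕ) (i : Fin 2) (j : Fin (c - 1)) (k : Fin c) :
    starRingEnd ℂ (pencilScaled c i j k) * pencilScaled c i j k = pencilWeight c i j k := by
  have hj := j.isLt
  fin_cases i <;>
    simp only [pencilScaled, pencilWeight, Fin.zero_eta, Fin.mk_one, Fin.isValue, one_ne_zero,
      ↓reduceIte, mul_ite, mul_zero, add_zero, Nat.cast_ite, CharP.cast_eq_zero] <;>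
    split_ifs with hk
  · have hjc : ((j : ℕ) : ℝ) + 1 ≤ c := by exact_mod_cast (by omega : (j : ℕ) + 1 ≤ c)
    rw [starRingEnd_sqrt_mul_sqrt (by linarith), hk, Nat.sub_sub, Nat.cast_sub (by omega)]
    push_cast
    ring
  · rfl
  · rw [starRingEnd_sqrt_mul_sqrt (by positivity)]
    push_cast [hk]
    rfl
  · rfl

lemma val_eq_add_of_pencilScaled_ne_zero {c : ℕ} {i : Fin 2} {j : Fin (c - 1)} {k : Fin c}
    (h : pencilScaled c i j k ≠ 0) : (k : ℕ) = j + i := by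
  fin_cases i <;> simp only [pencilScaled] at h <;> split_ifs at h <;> simp_all

lemma pencilWeight_marginal₁ (c : ℕ) (i : Fin 2) :
    2 * ∑ j, ∑ k, pencilWeight c i j k = (c - 1) * c := by
  have hslice : ∀ j : Fin (c - 1),
      ∑ k, pencilWeight c i j k = if i = 0 then c - 1 - j else j + 1 := by
    intro j
    have := j.isLt
    fin_cases i <;>
      simp only [pencilWeight, Fin.zero_eta, Fin.mk_one, Fin.isValue, one_ne_zero, ↓reduceIte,
        add_zero, Fin.sum_ite_val_eq, dite_eq_ite, ite_eq_left_iff, not_lt] <;>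
      omega
  have hn : (c - 1) * (c - 1 + 1) = (c - 1) * c := by cases c <;> simp
  simp only [hslice]
  fin_cases i
  · simp only [Fin.zero_eta, Fin.isValue, ↓reduceIte]
    rw [Fin.sum_sub_val, Fin.two_mul_sum_val_add_one, hn]
  · simp only [Fin.mk_one, Fin.isValue, one_ne_zero, ↓reduceIte]
    rw [Fin.two_mul_sum_val_add_one, hn]

lemma pencilWeight_marginal₂ (c : ℕ) (j : Fin (c - 1)) :
    ∑ i, ∑ k, pencilWeight c i j k = c := by
  have hj := j.isLt
  simp only [pencilWeight, Fin.isValue, Fin.sum_ite_val_eq, dite_eq_ite, Fin.sum_univ_two,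
    Fin.coe_ofNat_eq_mod, Nat.zero_mod, add_zero, ↓reduceIte, Nat.mod_succ, one_ne_zero]
  split_ifs <;> omega

lemma pencilWeight_marginal₃ (c : ℕ) (k : Fin c) :
    ∑ i, ∑ j, pencilWeight c i j k = c - 1 := by
  have hk := k.isLt
  simp only [pencilWeight, Fin.isValue, Fin.sum_ite_eq_val_add, Fin.sum_univ_two,
    Fin.coe_ofNat_eq_mod, Nat.zero_mod, zero_le, add_zero, true_and, ↓reduceIte, Nat.mod_succ,
    Order.lt_add_one_iff, one_ne_zero]
  split_ifs <;> omega

lemma isFree_pencilScaled (c : ℕ) : IsFree (pencilScaled c) :=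
  .of_ne_zero_imp_val_eq_add fun _ _ _ => val_eq_add_of_pencilScaled_ne_zero

lemma gram1_pencilScaled (c : ℕ) :
    gram1 (pencilScaled c) = (((c - 1 : ℕ) : ℂ) * c / 2) • 1 := by
  rw [(isFree_pencilScaled c).gram1_eq_diagonal, Matrix.smul_one_eq_diagonal]
  congr 1
  funext i
  simp only [star_pencilScaled_mul_self]
  rw [eq_div_iff two_ne_zero]
  exact_mod_cast (mul_comm _ _).trans (pencilWeight_marginal₁ c i)

lemma gram2_pencilScaled (c : ℕ) : gram2 (pencilScaled c) = (c : ℂ) • 1 := by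
  rw [(isFree_pencilScaled c).gram2_eq_diagonal, Matrix.smul_one_eq_diagonal]
  congr 1
  funext j
  simp only [star_pencilScaled_mul_self]
  exact_mod_cast pencilWeight_marginal₂ c j

lemma gram3_pencilScaled (c : ℕ) : gram3 (pencilScaled c) = ((c - 1 : ℕ) : ℂ) • 1 := by
  rw [(isFree_pencilScaled c).gram3_eq_diagonal, Matrix.smul_one_eq_diagonal]
  congr 1
  funext k
  simp only [star_pencilScaled_mul_self]
  exact_mod_cast pencilWeight_marginal₃ c k

/-- the marginals of `P'_c` are uniform:
`μ₁ = I₂/2`, `μ₂ = I_{c-1}/(c-1)`, `μ₃ = I_c/c`. -/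
theorem pencilScaled_uniform_marginals (c : ℕ) (hc : 2 ≤ c) :
    (∑ i, ∑ j, ∑ k, (starRingEnd ℂ) (pencilScaled c i j k) * pencilScaled c i j k) ≠ 0 ∧
    gram1 (pencilScaled c)
      = ((∑ i, ∑ j, ∑ k, (starRingEnd ℂ) (pencilScaled c i j k) * pencilScaled c i j k) / 2)
          • (1 : Matrix (Fin 2) (Fin 2) ℂ) ∧
    gram2 (pencilScaled c)
      = ((∑ i, ∑ j, ∑ k, (starRingEnd ℂ) (pencilScaled c i j k) * pencilScaled c i j k) / ((c : ℂ) - 1))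
          • (1 : Matrix (Fin (c - 1)) (Fin (c - 1)) ℂ) ∧
    gram3 (pencilScaled c)
      = ((∑ i, ∑ j, ∑ k, (starRingEnd ℂ) (pencilScaled c i j k) * pencilScaled c i j k) / (c : ℂ))
          • (1 : Matrix (Fin c) (Fin c) ℂ) := by
  have hc₀ : (c : ℂ) ≠ 0 := by exact_mod_cast (by omega : c ≠ 0)
  have hc₁ : (c : ℂ) - 1 ≠ 0 := sub_ne_zero.mpr (by exact_mod_cast (by omega : c ≠ 1))
  have hcast : ((c - 1 : ℕ) : ℂ) = c - 1 := Nat.cast_pred (by omega)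
  have htotal : (∑ i, ∑ j, ∑ k, (starRingEnd ℂ) (pencilScaled c i j k) * pencilScaled c i j k)
      = (c - 1) * c := by
    rw [← trace_gram1, gram1_pencilScaled, Matrix.trace_smul, Matrix.trace_one, hcast]
    simp only [Fintype.card_fin, Nat.cast_ofNat, smul_eq_mul]
    ring
  rw [htotal, gram1_pencilScaled, gram2_pencilScaled, gram3_pencilScaled, hcast]
  refine ⟨mul_ne_zero hc₁ hc₀, rfl, ?_, ?_⟩ <;> congr 1 <;> field_simp
end

section
/- The skew-symmetric tensor T = e_1 \wedge e_2 \wedge e_3 \in C^3 \otimes C^3 \otimes C^3 does not restrict to the tensor M_{1,1,3} = \sum_{k=1}^3 e_1 \otimes e_k \otimes e_k: there are no linear maps A: C^3 \to C, B: C^3 \to C^3, C: C^3 \to C^3 with (A \otimes B \otimes C) T = M_{1,1,3}. -/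
open scoped BigOperators

/-! Every contraction of `e₁ ∧ e₂ ∧ e₃` in the first factor is a skew-symmetric `3 × 3` matrix,
hence singular. The slice of `(A ⊗ B ⊗ C) T` is `B * (A-contraction of T) * Cᵀ`, so a restriction
to `M_{1,1,3}`, whose slice is the identity, would factor the identity through a singular matrix. -/

open scoped Matrix

theorem Matrix.det_eq_zero_of_transpose_eq_neg {n R : Type*} [DecidableEq n] [Fintype n]
    [CommRing R] [IsAddTorsionFree R] {M : Matrix n n R} (hM : Mᵀ = -M)
    (hn : Odd (Fintype.card n)) : M.det = 0 :=
  self_eq_neg.mp <| calc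
    M.det = Mᵀ.det := M.det_transpose.symm
    _ = (-M).det := by rw [hM]
    _ = -M.det := by rw [Matrix.det_neg, hn.neg_one_pow, neg_one_mul]

theorem of_restrict_eq_mul_contr1 {ι₁ ι₂ ι₃ κ₁ κ₂ κ₃ : Type*}
    [Fintype ι₁] [Fintype ι₂] [Fintype ι₃]
    (A : Matrix κ₁ ι₁ ℂ) (B : Matrix κ₂ ι₂ ℂ) (C : Matrix κ₃ ι₃ ℂ)
    (T : ι₁ → ι₂ → ι₃ → ℂ) (x : κ₁) :
    (Matrix.of (restrict A B C T x) : Matrix κ₂ κ₃ ℂ) = B * contr1 (A x) T * Cᵀ := by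
  ext y z
  simp only [restrict, contr1, Matrix.of_apply, Matrix.mul_apply, Matrix.transpose_apply,
    Finset.mul_sum, Finset.sum_mul]
  rw [Finset.sum_comm]
  conv_rhs => rw [Finset.sum_comm]
  refine Finset.sum_congr rfl fun j _ => ?_
  rw [Finset.sum_comm]
  refine Finset.sum_congr rfl fun k _ => Finset.sum_congr rfl fun i _ => ?_
  ring

theorem contr1_transpose_eq_neg {ι₁ ι₂ : Type*} [Fintype ι₁] (β : ι₁ → ℂ)
    {T : ι₁ → ι₂ → ι₂ → ℂ} (hT : ∀ i j k, T i k j = -T i j k) :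
    (contr1 β T)ᵀ = -contr1 β T := by
  ext j k
  simp only [Matrix.transpose_apply, Matrix.neg_apply, contr1, Matrix.of_apply,
    ← Finset.sum_neg_distrib, ← mul_neg]
  exact Finset.sum_congr rfl fun i _ => by rw [hT]

theorem wedge_swap_right (i j k : Fin 3) : wedge i k j = -wedge i j k := by
  unfold wedge
  rw [← Finset.sum_neg_distrib]
  -- composing with the transposition `(1 2)` swaps the last two slots and flips the sign
  refine Fintype.sum_equiv (Equiv.mulRight (Equiv.swap 1 2)) _ _ fun σ => ?_
  have h0 : Equiv.swap (1 : Fin 3) 2 0 = 0 := by decide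
  have h1 : Equiv.swap (1 : Fin 3) 2 1 = 2 := by decide
  have h2 : Equiv.swap (1 : Fin 3) 2 2 = 1 := by decide
  have hsign : Equiv.Perm.sign (Equiv.swap (1 : Fin 3) 2) = -1 := by decide
  simp only [Equiv.coe_mulRight, Equiv.Perm.mul_apply, Equiv.Perm.sign_mul, h0, h1, h2, hsign]
  push_cast
  by_cases h : i = σ 0 ∧ k = σ 1 ∧ j = σ 2
  · rw [if_pos h, if_pos ⟨h.1, h.2.2, h.2.1⟩]; ring
  · rw [if_neg h, if_neg (by tauto)]; ring

theorem det_contr1_wedge (β : Fin 3 → ℂ) : (contr1 β wedge).det = 0 :=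
  Matrix.det_eq_zero_of_transpose_eq_neg (contr1_transpose_eq_neg β wedge_swap_right)
    (by decide)

/-- `e₁ ∧ e₂ ∧ e₃` does not restrict to `M_{1,1,3}`. -/
theorem wedge_not_restrict_M113 :
    ¬ ∃ (A : Matrix (Fin 1) (Fin 3) ℂ) (B : Matrix (Fin 3) (Fin 3) ℂ)
        (C : Matrix (Fin 3) (Fin 3) ℂ),
        restrict A B C wedge
          = fun (_ : Fin 1) (j k : Fin 3) => if j = k then (1 : ℂ) else 0 := by
  rintro ⟨A, B, C, h⟩
  have hslice : B * contr1 (A 0) wedge * Cᵀ = 1 := by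
    rw [← of_restrict_eq_mul_contr1, h]
    rfl
  have hdet := congrArg Matrix.det hslice
  rw [Matrix.det_mul, Matrix.det_mul, det_contr1_wedge, Matrix.det_one] at hdet
  simp at hdet
end

section
/- If T = (A_1 \otimes ... \otimes A_k) IMM_n^k is a restriction of the order-k iterated matrix multiplication tensor and rank(A_k) = 1, then T factors as T = S \otimes w where w is a vector and S is a restriction of IMM_n^{k-1}. -/
open scoped BigOperators

/-! Evaluated at `x`, a restriction of `IMM_n^k` is the sum over closed walks
`i₀ → i₁ → ⋯ → i₀` in `Fin n` of `∏ Aₗ(xₗ)(iₗ, iₗ₊₁)`, i.e. the trace of the product of the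
`n × n` matrices `Aₗ(xₗ)`. If the last map has rank one, its matrices are `w(z) • V` for a fixed
`V`; pulling out the scalar `w(xₖ)` and absorbing `V` into the preceding factor,
`Aₖ₋₁(z) ↦ Aₖ₋₁(z) * V`, leaves a restriction of `IMM_n^(k-1)`. -/

open Matrix

theorem Matrix.exists_eq_vecMulVec_of_rank_eq_one {m p K : Type*} [Field K] [Fintype p]
    {A : Matrix m p K} (hA : A.rank = 1) :
    ∃ (w : m → K) (v : p → K), A = vecMulVec w v := by
  rw [rank_eq_finrank_span_cols, finrank_eq_one_iff'] at hA
  obtain ⟨u, -, hspan⟩ := hA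
  choose c hc using hspan
  refine ⟨u, fun q => c ⟨A.col q, Submodule.subset_span ⟨q, rfl⟩⟩, ?_⟩
  ext x q
  have := congrArg (fun y : Submodule.span K (Set.range A.col) => (y : m → K) x)
    (hc ⟨A.col q, Submodule.subset_span ⟨q, rfl⟩⟩)
  simpa [vecMulVec_apply, mul_comm] using this.symm

theorem finRotate_castSucc {n : ℕ} (i : Fin n) :
    finRotate (n + 1) (Fin.castSucc i) = i.succ := by
  rw [finRotate_apply, Fin.coeSucc_eq_succ]

theorem finRotate_eq_mk_mod {k : ℕ} (ℓ : Fin k) :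
    finRotate k ℓ = ⟨((ℓ : ℕ) + 1) % k, Nat.mod_lt _ ℓ.pos⟩ := by
  have := ℓ.neZero
  ext
  rw [finRotate_apply, Fin.val_add, Fin.val_one', Nat.add_mod_mod]

section CyclicPathSum

variable {R ι : Type*} [CommSemiring R] [Fintype ι]

/-- For `k ≥ 1` this is `trace (F 0 * F 1 * ⋯ * F (k - 1))`; for `k = 0` it is `1`. -/
def cyclicPathSum {k : ℕ} (F : Fin k → Matrix ι ι R) : R :=
  ∑ i : Fin k → ι, ∏ ℓ, F ℓ (i ℓ) (i (finRotate k ℓ))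

theorem cyclicPathSum_snoc_smul {m : ℕ} (F : Fin m → Matrix ι ι R) (c : R)
    (V : Matrix ι ι R) :
    cyclicPathSum (Fin.snoc F (c • V) : Fin (m + 1) → Matrix ι ι R)
      = c * cyclicPathSum (Fin.snoc F V : Fin (m + 1) → Matrix ι ι R) := by
  simp only [cyclicPathSum, Finset.mul_sum, Fin.prod_univ_castSucc, Fin.snoc_castSucc,
    Fin.snoc_last, Matrix.smul_apply, smul_eq_mul]
  exact Finset.sum_congr rfl fun i _ => by ring

theorem cyclicPathSum_snoc {m : ℕ} (F : Fin (m + 1) → Matrix ι ι R) (V : Matrix ι ι R) :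
    cyclicPathSum (Fin.snoc F V : Fin (m + 2) → Matrix ι ι R)
      = cyclicPathSum (Function.update F (Fin.last m) (F (Fin.last m) * V)) := by
  rw [cyclicPathSum, ← (Fin.snocEquiv fun _ => ι).sum_comp, Fintype.sum_prod_type,
    Finset.sum_comm, cyclicPathSum]
  refine Finset.sum_congr rfl fun j _ => ?_
  simp only [Fin.snocEquiv, Equiv.coe_fn_mk, Fin.prod_univ_castSucc, finRotate_castSucc,
    finRotate_last, ← Fin.castSucc_zero, Fin.succ_castSucc, Fin.succ_last, Fin.snoc_castSucc,
    Fin.snoc_last, mul_apply, Finset.mul_sum,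
    Function.update_apply, Fin.castSucc_ne_last, if_true, if_false]
  exact Finset.sum_congr rfl fun b _ => by ring

end CyclicPathSum

theorem restrictK_IMM_eq_cyclicPathSum {n k : ℕ} {κ : Fin k → Type*}
    (A : ∀ ℓ, Matrix (κ ℓ) (Fin n × Fin n) ℂ) (x : ∀ ℓ, κ ℓ) :
    restrictK A (IMM n k) x = cyclicPathSum fun ℓ => Matrix.of (Function.curry (A ℓ (x ℓ))) := by
  simp only [restrictK, IMM, cyclicPathSum, finRotate_eq_mk_mod, Finset.mul_sum, mul_ite, mul_one,
    mul_zero, ← funext_iff]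
  rw [Finset.sum_comm]
  simp

theorem IMM_restriction_rank_one_factor_general (n k : ℕ) (hk : 2 ≤ k)
    (κ : Fin (k + 1) → Type)
    (A : ∀ ℓ : Fin (k + 1), Matrix (κ ℓ) (Fin n × Fin n) ℂ)
    (hA : (A (Fin.last k)).rank = 1)
    (T : (∀ ℓ : Fin (k + 1), κ ℓ) → ℂ)
    (hT : T = restrictK A (IMM n (k + 1))) :
    ∃ (w : κ (Fin.last k) → ℂ)
      (B : ∀ ℓ : Fin k, Matrix (κ ℓ.castSucc) (Fin n × Fin n) ℂ),
      ∀ x, T x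
        = restrictK B (IMM n k) (fun ℓ => x ℓ.castSucc) * w (x (Fin.last k)) := by
  obtain ⟨m, rfl⟩ : ∃ m, k = m + 1 := ⟨k - 1, by omega⟩
  obtain ⟨w, v, hwv⟩ := exists_eq_vecMulVec_of_rank_eq_one hA
  let V : Matrix (Fin n) (Fin n) ℂ := Matrix.of (Function.curry v)
  let B : ∀ ℓ : Fin (m + 1), Matrix (κ ℓ.castSucc) (Fin n × Fin n) ℂ :=
    fun ℓ => if ℓ = Fin.last m then
      fun z p => ∑ b, A ℓ.castSucc z (p.1, b) * v (b, p.2)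
    else A ℓ.castSucc
  refine ⟨w, B, fun x => ?_⟩
  have hsnoc : (fun ℓ => Matrix.of (Function.curry (A ℓ (x ℓ))))
      = Fin.snoc (fun ℓ : Fin (m + 1) => Matrix.of (Function.curry (A ℓ.castSucc (x ℓ.castSucc))))
          (w (x (Fin.last _)) • V) := by
    funext ℓ
    refine Fin.lastCases ?_ (fun ℓ => ?_) ℓ
    · ext a b
      simp [hwv, V, vecMulVec_apply]
    · simp
  rw [hT, restrictK_IMM_eq_cyclicPathSum, restrictK_IMM_eq_cyclicPathSum, hsnoc,
    cyclicPathSum_snoc_smul, cyclicPathSum_snoc, mul_comm]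
  congr 2
  funext ℓ
  by_cases h : ℓ = Fin.last m
  · subst h
    ext a b
    simp [B, V, mul_apply]
  · simp [B, h]

/-- a restriction of `IMM_n^{k+1}` whose last map has rank 1
factors as `S ⊗ w` with `S` a restriction of `IMM_n^k`. -/
theorem IMM_restriction_rank_one_factor (n k : ℕ) (hk : 2 ≤ k)
    (κ : Fin (k + 1) → Type) [∀ ℓ, Fintype (κ ℓ)]
    (A : ∀ ℓ : Fin (k + 1), Matrix (κ ℓ) (Fin n × Fin n) ℂ)
    (hA : (A (Fin.last k)).rank = 1)
    (T : (∀ ℓ : Fin (k + 1), κ ℓ) → ℂ)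
    (hT : T = restrictK A (IMM n (k + 1))) :
    ∃ (w : κ (Fin.last k) → ℂ)
      (B : ∀ ℓ : Fin k, Matrix (κ ℓ.castSucc) (Fin n × Fin n) ℂ),
      ∀ x, T x
        = restrictK B (IMM n k) (fun ℓ => x ℓ.castSucc) * w (x (Fin.last k)) :=
  IMM_restriction_rank_one_factor_general n k hk κ A hA T hT
end
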